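/- arXiv:1806.07112 — 2 statements merged into one kernel-verified Lean document; each statement's English description precedes it below -/
import Mathlib

section
/- Let x ∈ X be a smooth point on an n-dimensional variety, and for ε ∈ (0,1] let E_ε be the exceptional divisor of the weighted blow-up at x with weights (1, ε, ..., ε) in local coordinates where the first coordinate cuts out a smooth divisor D through x. Then for the pair (X, D), the normalized volume satisfies vol-hat_{(X,D)}(ord_{E_ε}) = (n-1)^n·ε, which tends to 0 as ε → 0. In particular, an lc but not klt point has infimum of normalized volume equal to 0. -/
open Filter Topology

/-- Let `x ∈ X` be a smooth point on an `n`-dimensional variety, `D` a smooth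
divisor through `x` cut out by the first coordinate, and for `ε ∈ (0,1]` let
`E_ε` be the exceptional divisor of the weighted blow-up with weights
`(1,ε,…,ε)`, i.e. the monomial valuation with these weights.  For the pair
`(X,D)` one has `A_{(X,D)}(ord_{E_ε}) = (1 + (n-1)ε) - 1 = (n-1)ε` and
`vol(ord_{E_ε}) = 1/ε^{n-1}`, so the normalized volume is
`vol-hat_{(X,D)}(ord_{E_ε}) = ((n-1)ε)^n / ε^{n-1} = (n-1)^n·ε`, which tends to
`0` as `ε → 0`; in particular the infimum of the normalized volume is `0`
(an lc but not klt point has normalized volume `0`). -/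
theorem nvol_weighted_blowup_lc_point
    (n : ℕ) (hn : 2 ≤ n)
    (A vol : (Fin n → ℝ) → ℝ)
    -- log discrepancy of the monomial valuation with weights `w` for the pair
    -- `(X, D)`, `D = {x₀ = 0}` with coefficient 1:
    (hA : ∀ w : Fin n → ℝ, (∀ i, 0 < w i) →
      A w = (∑ i, w i) - w ⟨0, by omega⟩)
    -- volume of a monomial valuation:
    (hvol : ∀ w : Fin n → ℝ, (∀ i, 0 < w i) → vol w = 1 / ∏ i, w i) :
    (∀ ε : ℝ, ε ∈ Set.Ioc (0 : ℝ) 1 →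
        A (fun i => if (i : ℕ) = 0 then 1 else ε) ^ n
            * vol (fun i => if (i : ℕ) = 0 then 1 else ε)
          = ((n : ℝ) - 1) ^ n * ε) ∧
      Tendsto (fun ε : ℝ =>
          A (fun i => if (i : ℕ) = 0 then 1 else ε) ^ n
            * vol (fun i => if (i : ℕ) = 0 then 1 else ε))
        (𝓝[>] 0) (𝓝 0) ∧
      sInf ((fun ε : ℝ =>
          A (fun i => if (i : ℕ) = 0 then 1 else ε) ^ n
            * vol (fun i => if (i : ℕ) = 0 then 1 else ε))
            '' Set.Ioc (0 : ℝ) 1) = 0 := by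
  obtain ⟨m, rfl⟩ : ∃ m, n = m + 2 := ⟨n - 2, by omega⟩
  set c : ℝ := ((m : ℝ) + 1) ^ (m + 2) with hc
  have hc0 : (0 : ℝ) < c := by positivity
  have key : ∀ ε : ℝ, 0 < ε →
      A (fun i => if (i : ℕ) = 0 then 1 else ε) ^ (m + 2)
        * vol (fun i => if (i : ℕ) = 0 then 1 else ε) = c * ε := by
    intro ε hε
    have hw : ∀ i : Fin (m + 2),
        0 < (fun i : Fin (m + 2) => if (i : ℕ) = 0 then (1 : ℝ) else ε) i := by
      intro i; dsimp only; split
      · norm_num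
      · exact hε
    rw [hA _ hw, hvol _ hw]
    have hsum : ∑ i : Fin (m + 2), (if (i : ℕ) = 0 then (1 : ℝ) else ε)
        = 1 + ((m : ℝ) + 1) * ε := by
      rw [Fin.sum_univ_succ]
      simp [Fin.val_succ]
    have hprod : ∏ i : Fin (m + 2), (if (i : ℕ) = 0 then (1 : ℝ) else ε)
        = ε ^ (m + 1) := by
      rw [Fin.prod_univ_succ]
      simp [Fin.val_succ]
    rw [hsum, hprod]
    have h0 : ((⟨0, by omega⟩ : Fin (m + 2)) : ℕ) = 0 := rfl
    rw [h0, if_pos rfl]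
    have h1 : 1 + ((m : ℝ) + 1) * ε - 1 = ((m : ℝ) + 1) * ε := by ring
    have hεne : ε ^ (m + 1) ≠ 0 := by positivity
    rw [h1, mul_pow, pow_succ, hc]
    field_simp
    ring
  refine ⟨?_, ?_, ?_⟩
  · intro ε hε
    rw [key ε hε.1, hc]
    push_cast
    ring
  · have hev : (fun ε : ℝ => c * ε) =ᶠ[𝓝[>] (0:ℝ)]
        (fun ε : ℝ =>
          A (fun i => if (i : ℕ) = 0 then 1 else ε) ^ (m + 2)
            * vol (fun i => if (i : ℕ) = 0 then 1 else ε)) :=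
      eventually_mem_nhdsWithin.mono fun ε hε => (key ε hε).symm
    have ht : Tendsto (fun ε : ℝ => c * ε) (𝓝[>] (0:ℝ)) (𝓝 0) := by
      have h1 : Tendsto (fun ε : ℝ => c * ε) (𝓝 (0:ℝ)) (𝓝 (c * 0)) :=
        (tendsto_id (x := 𝓝 (0:ℝ))).const_mul c
      rw [mul_zero] at h1
      exact h1.mono_left (nhdsWithin_le_nhds (s := Set.Ioi (0:ℝ)))
    exact ht.congr' hev
  · have himg : (fun ε : ℝ =>
        A (fun i => if (i : ℕ) = 0 then 1 else ε) ^ (m + 2)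
          * vol (fun i => if (i : ℕ) = 0 then 1 else ε)) '' Set.Ioc (0:ℝ) 1
        = Set.Ioc 0 c := by
      ext y
      constructor
      · rintro ⟨ε, hε, rfl⟩
        dsimp only
        rw [key ε hε.1]
        exact ⟨mul_pos hc0 hε.1, by nlinarith [hε.2, hε.1]⟩
      · intro hy
        refine ⟨y / c, ⟨div_pos hy.1 hc0, (div_le_one hc0).2 hy.2⟩, ?_⟩
        dsimp only
        rw [key _ (div_pos hy.1 hc0)]
        field_simp
    rw [himg, csInf_Ioc hc0]
end

section
/- With the setup of lines through the origin in ℂ² and δ < 2δ_m (so the heaviest line L_m dominates), the minimal normalized volume over monomial valuations adapted to coordinates (x,y) with L_m = {x=0} equals 4(1−δ+δ_m)(1−δ_m), attained at the monomial valuation with weights proportional to (1−δ+δ_m, 1−δ_m). -/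
/-- Lines through the origin in `ℂ²`, `D = Σ δᵢLᵢ`, `δ = Σδᵢ`, `(ℂ²,D)` klt at
`0`, in the case `δ < 2δ_m` (the heaviest line `L_m = {x = 0}` dominates).
For a monomial valuation with weights `(a,b)` adapted to coordinates `(x,y)`
one has `A = a + b − δ_m·a − (δ−δ_m)·min(a,b)` and `vol = 1/(ab)`.  The minimal
normalized volume over monomial valuations equals `4(1−δ+δ_m)(1−δ_m)`,
attained at the monomial valuation with weights proportional to
`(1−δ+δ_m, 1−δ_m)`. -/
theorem lines_arrangement_nvol_unbalanced_case
    (m : ℕ) (δ : Fin (m + 1) → ℝ)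
    (hmono : Monotone δ)
    (h0 : ∀ i, 0 ≤ δ i) (h1 : ∀ i, δ i < 1)
    (hklt : (∑ i, δ i) - δ (Fin.last m) < 1)
    (hdom : ∑ i, δ i < 2 * δ (Fin.last m))
    (nv : ℝ → ℝ → ℝ)
    (hnv : ∀ a b : ℝ, 0 < a → 0 < b →
      nv a b = (a + b - δ (Fin.last m) * a
        - ((∑ i, δ i) - δ (Fin.last m)) * min a b) ^ 2 / (a * b)) :
    nv (1 - (∑ i, δ i) + δ (Fin.last m)) (1 - δ (Fin.last m))
        = 4 * (1 - (∑ i, δ i) + δ (Fin.last m)) * (1 - δ (Fin.last m)) ∧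
      ∀ a b : ℝ, 0 < a → 0 < b →
        nv (1 - (∑ i, δ i) + δ (Fin.last m)) (1 - δ (Fin.last m)) ≤ nv a b := by
  set S := ∑ i, δ i with hS
  set d := δ (Fin.last m) with hd
  have hdS : d ≤ S := Finset.single_le_sum (fun i _ => h0 i) (Finset.mem_univ _)
  have hd0 : 0 ≤ d := h0 _
  have hd1 : d < 1 := h1 _
  have hα : 0 < 1 - S + d := by linarith
  have hβ : 0 < 1 - d := by linarith
  have hmin : min (1 - S + d) (1 - d) = 1 - d := min_eq_right (by linarith)
  have hval : nv (1 - S + d) (1 - d) = 4 * (1 - S + d) * (1 - d) := by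
    rw [hnv _ _ hα hβ, hmin]
    field_simp
    ring
  refine ⟨hval, fun a b ha hb => ?_⟩
  rw [hval, hnv _ _ ha hb, le_div_iff₀ (mul_pos ha hb)]
  have hA : (1 - d) * a + (1 - S + d) * b ≤ a + b - d * a - (S - d) * min a b := by
    rcases le_total b a with h | h
    · rw [min_eq_right h]; nlinarith
    · rw [min_eq_left h]
      nlinarith [mul_nonneg (sub_nonneg.mpr hdS) (sub_nonneg.mpr h)]
  have hApos : 0 < (1 - d) * a + (1 - S + d) * b := by positivity
  nlinarith [sq_nonneg ((1 - d) * a - (1 - S + d) * b), sq_nonneg ((1 - d) * a + (1 - S + d) * b)]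
end
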